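/- Let Λ ⊆ EuclideanSpace ℝ (Fin 3) be the ℤ-span of (2,0,0), (0,2,0) and (1,0,1) (a lattice of covolume 4). Then: (i) the vectors (1,0,1) and (-1,0,1) lie in Λ, are orthogonal, and both have norm √2, but 2·4/(√2)³ = 2√2 is not an integer; (ii) every pair of nonzero orthogonal vectors v₁, v₂ ∈ Λ with ‖v₁‖ = ‖v₂‖ = l and 8/l³ ∈ ℤ satisfies l ≥ 2; and (iii) the pair (2,0,0), (0,2,0) realises l = 2 with 8/2³ = 1 ∈ ℤ. -/

import Mathlib

/-!
The generators `(2,0,0)`, `(0,2,0)`, `(1,0,1)` have a Gram matrix with even entries, so `⟪v, w⟫ ∈ 2ℤ`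
on the whole lattice and a nonzero lattice vector has `‖v‖² ∈ {2, 4, 6, …}`: its length is `√2` or at
least `2`. Length `√2` is ruled out by the integrality condition, since `8 / √2³ = 2√2` is irrational.
-/

open scoped RealInnerProductSpace

/-- The vector `(2,0,0)`. -/
noncomputable def u₁ : EuclideanSpace ℝ (Fin 3) := EuclideanSpace.single 0 (2 : ℝ)

/-- The vector `(0,2,0)`. -/
noncomputable def u₂ : EuclideanSpace ℝ (Fin 3) := EuclideanSpace.single 1 (2 : ℝ)

/-- The vector `(1,0,1)`. -/
noncomputable def u₃ : EuclideanSpace ℝ (Fin 3) :=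
  EuclideanSpace.single 0 (1 : ℝ) + EuclideanSpace.single 2 (1 : ℝ)

/-- The lattice generated by `(2,0,0)`, `(0,2,0)` and `(1,0,1)` (covolume 4). -/
noncomputable def specialLattice : Submodule ℤ (EuclideanSpace ℝ (Fin 3)) :=
  Submodule.span ℤ {u₁, u₂, u₃}

open Submodule

section IntegralSpan

variable {E : Type*} [SeminormedAddCommGroup E] [InnerProductSpace ℝ E] {S : Set E}
  {G : AddSubgroup ℝ}

theorem inner_mem_of_mem_span_left {w : E} (hS : ∀ s ∈ S, ⟪s, w⟫ ∈ G) {v : E}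
    (hv : v ∈ span ℤ S) : ⟪v, w⟫ ∈ G := by
  induction hv using Submodule.span_induction with
  | mem s hs => exact hS s hs
  | zero => simp
  | add x y _ _ hx hy => rw [inner_add_left]; exact add_mem hx hy
  | smul n x _ hx =>
    rw [← Int.cast_smul_eq_zsmul ℝ, real_inner_smul_left, ← zsmul_eq_mul]
    exact zsmul_mem hx n

theorem inner_mem_of_mem_span (hS : ∀ s ∈ S, ∀ t ∈ S, ⟪s, t⟫ ∈ G) {v w : E}
    (hv : v ∈ span ℤ S) (hw : w ∈ span ℤ S) : ⟪v, w⟫ ∈ G :=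
  inner_mem_of_mem_span_left (fun s hs ↦ by
    rw [real_inner_comm]
    exact inner_mem_of_mem_span_left (fun t ht ↦ hS t ht s hs) hw) hv

end IntegralSpan

@[simp] theorem norm_u₁ : ‖u₁‖ = 2 := by simp [u₁]
@[simp] theorem norm_u₂ : ‖u₂‖ = 2 := by simp [u₂]
@[simp] theorem norm_u₃ : ‖u₃‖ = √2 := by
  rw [norm_eq_sqrt_real_inner]
  simp only [u₃, inner_add_left, EuclideanSpace.inner_single_left]
  simp; norm_num
@[simp] theorem inner_u₁_u₂ : ⟪u₁, u₂⟫ = 0 := by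
  simp [u₁, u₂, EuclideanSpace.inner_single_left]
@[simp] theorem inner_u₁_u₃ : ⟪u₁, u₃⟫ = 2 := by
  simp [u₁, u₃, EuclideanSpace.inner_single_left, inner_add_right]
@[simp] theorem inner_u₂_u₃ : ⟪u₂, u₃⟫ = 0 := by
  simp [u₂, u₃, EuclideanSpace.inner_single_left, inner_add_right]

theorem u₁_mem_specialLattice : u₁ ∈ specialLattice := subset_span (by simp)
theorem u₂_mem_specialLattice : u₂ ∈ specialLattice := subset_span (by simp)
theorem u₃_mem_specialLattice : u₃ ∈ specialLattice := subset_span (by simp)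

theorem inner_mem_zmultiples_two {v w : EuclideanSpace ℝ (Fin 3)} (hv : v ∈ specialLattice)
    (hw : w ∈ specialLattice) : ⟪v, w⟫ ∈ AddSubgroup.zmultiples (2 : ℝ) := by
  refine inner_mem_of_mem_span ?_ hv hw
  simp only [Set.mem_insert_iff, Set.mem_singleton_iff]
  rintro s (rfl | rfl | rfl) t (rfl | rfl | rfl) <;>
    simp [real_inner_comm u₁ u₂, real_inner_comm u₁ u₃, real_inner_comm u₂ u₃,
      AddSubgroup.mem_zmultiples_iff]
  all_goals exact ⟨2, by norm_num⟩

theorem exists_norm_sq_eq_two_mul {v : EuclideanSpace ℝ (Fin 3)} (hv : v ∈ specialLattice) :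
    ∃ k : ℤ, ‖v‖ ^ 2 = 2 * k := by
  obtain ⟨k, hk⟩ := AddSubgroup.mem_zmultiples_iff.1 (inner_mem_zmultiples_two hv hv)
  exact ⟨k, by rw [← real_inner_self_eq_norm_sq, ← hk, zsmul_eq_mul, mul_comm]⟩

theorem norm_eq_sqrt_two_or_two_le_norm {v : EuclideanSpace ℝ (Fin 3)}
    (hv : v ∈ specialLattice) (hv₀ : v ≠ 0) : ‖v‖ = √2 ∨ 2 ≤ ‖v‖ := by
  obtain ⟨k, hk⟩ := exists_norm_sq_eq_two_mul hv
  have hk₀ : 0 < k := by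
    have : 0 < ‖v‖ ^ 2 := by positivity
    exact_mod_cast (by linarith : (0 : ℝ) < k)
  rcases (by omega : k = 1 ∨ 2 ≤ k) with rfl | hk₂
  · left
    rw [← Real.sqrt_sq (norm_nonneg v), hk]
    norm_num
  · right
    have : (4 : ℝ) ≤ ‖v‖ ^ 2 := by rw [hk]; exact_mod_cast (by omega : (4 : ℤ) ≤ 2 * k)
    nlinarith [norm_nonneg v]

theorem eight_div_sqrt_two_pow_three : 8 / √2 ^ 3 = 2 * √2 := by
  have h : √2 ^ 2 = 2 := Real.sq_sqrt zero_le_two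
  have : √2 ≠ 0 := by positivity
  field_simp
  nlinarith

theorem not_exists_int_eight_div_sqrt_two_pow_three : ¬∃ n : ℤ, 8 / √2 ^ 3 = n := by
  rintro ⟨n, hn⟩
  rw [eight_div_sqrt_two_pow_three] at hn
  exact (irrational_sqrt_two.natCast_mul two_ne_zero).ne_int n (by exact_mod_cast hn)

/-- In the lattice spanned by `(2,0,0)`, `(0,2,0)`, `(1,0,1)`: the pair `(1,0,1)`,
`(-1,0,1)` is orthogonal of common length `√2`, but `2·4/(√2)³ = 2√2` is not an integer;
every orthogonal equal-length pair of nonzero lattice vectors whose length `l` satisfies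
`8/l³ ∈ ℤ` has `l ≥ 2`; and the pair `(2,0,0)`, `(0,2,0)` realises `l = 2` with
`8/2³ = 1 ∈ ℤ`. -/
theorem special_lattice_recovers_h :
    (u₃ ∈ specialLattice ∧ u₃ - u₁ ∈ specialLattice ∧
      ⟪u₃, u₃ - u₁⟫ = 0 ∧ ‖u₃‖ = Real.sqrt 2 ∧ ‖u₃ - u₁‖ = Real.sqrt 2 ∧
      2 * 4 / (Real.sqrt 2) ^ 3 = 2 * Real.sqrt 2 ∧
      ¬∃ n : ℤ, 2 * 4 / (Real.sqrt 2) ^ 3 = (n : ℝ)) ∧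
    (∀ v₁ v₂ : EuclideanSpace ℝ (Fin 3), v₁ ∈ specialLattice → v₂ ∈ specialLattice →
      v₁ ≠ 0 → v₂ ≠ 0 → ⟪v₁, v₂⟫ = 0 → ‖v₁‖ = ‖v₂‖ →
      (∃ n : ℤ, 8 / ‖v₁‖ ^ 3 = (n : ℝ)) → 2 ≤ ‖v₁‖) ∧
    (u₁ ∈ specialLattice ∧ u₂ ∈ specialLattice ∧ ⟪u₁, u₂⟫ = 0 ∧
      ‖u₁‖ = 2 ∧ ‖u₂‖ = 2 ∧ (8 : ℝ) / 2 ^ 3 = ((1 : ℤ) : ℝ)) := by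
  have h₈ : (2 * 4 : ℝ) = 8 := by norm_num
  refine ⟨⟨u₃_mem_specialLattice, sub_mem u₃_mem_specialLattice u₁_mem_specialLattice,
    ?_, norm_u₃, ?_, h₈ ▸ eight_div_sqrt_two_pow_three,
    h₈ ▸ not_exists_int_eight_div_sqrt_two_pow_three⟩, ?_,
    ⟨u₁_mem_specialLattice, u₂_mem_specialLattice, inner_u₁_u₂, norm_u₁, norm_u₂, by norm_num⟩⟩
  · rw [inner_sub_right, real_inner_self_eq_norm_sq, real_inner_comm]
    simp
  · rw [← Real.sqrt_sq (norm_nonneg _), norm_sub_sq_real, real_inner_comm]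
    norm_num
  · intro v₁ _ hv₁ _ hv₁₀ _ _ _ hint
    refine (norm_eq_sqrt_two_or_two_le_norm hv₁ hv₁₀).resolve_left fun h ↦ ?_
    exact not_exists_int_eight_div_sqrt_two_pow_three (h ▸ hint)
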